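/- Let n ≥ 2, let H be a degenerate hyperplane in Minkowski n-space, and let ζ be a vector with ζ ∉ H. Then there exists a unique lightlike vector ξ ∈ H such that m(ζ,ξ) = 1. Moreover this ξ is g̃-metrically equivalent to the restriction of m(ζ,·) to H, i.e. g̃(ξ,v) = m(ζ,v) for all v ∈ H, and ξ is g̃-unitary: g̃(ξ,ξ) = 1. (Paper: Lemma characterizing the rigged vector field, stated pointwise.) -/

import Mathlib

/-!
Every lightlike vector of the degenerate hyperplane `H` is `m`-orthogonal to the radical vector
`ξ₀`, hence proportional to it by the equality case of Cauchy–Schwarz, and so lies in the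
radical itself. As `m` is nondegenerate and `H + ℝζ` is the whole space, `m(ζ, ξ₀) ≠ 0`, so
`ξ₀ / m(ζ, ξ₀)` is the only lightlike `ξ ∈ H` with `m(ζ, ξ) = 1`; and on `H` such a `ξ`
gives `g̃(ξ, v) = m(ξ, v) + m(ζ, v) = m(ζ, v)`.
-/

/-- The Minkowski bilinear form on `ℝ × ℝᵏ`:
`m((a,u),(b,v)) = -a·b + ⟨u,v⟩`. -/
noncomputable def mink {k : ℕ} (x y : ℝ × EuclideanSpace ℝ (Fin k)) : ℝ :=
  -(x.1 * y.1) + (inner ℝ x.2 y.2 : ℝ)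

section Minkowski

variable {k : ℕ} {x y : ℝ × EuclideanSpace ℝ (Fin k)}

lemma mink_comm (x y : ℝ × EuclideanSpace ℝ (Fin k)) : mink x y = mink y x := by
  simp [mink, real_inner_comm, mul_comm]

lemma mink_smul_left (c : ℝ) (x y : ℝ × EuclideanSpace ℝ (Fin k)) :
    mink (c • x) y = c * mink x y := by
  simp only [mink, Prod.smul_fst, Prod.smul_snd, smul_eq_mul, real_inner_smul_left]; ring

lemma mink_smul_right (c : ℝ) (x y : ℝ × EuclideanSpace ℝ (Fin k)) :
    mink x (c • y) = c * mink x y := by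
  rw [mink_comm, mink_smul_left, mink_comm]

lemma mink_add_right (x y z : ℝ × EuclideanSpace ℝ (Fin k)) :
    mink x (y + z) = mink x y + mink x z := by
  simp only [mink, Prod.fst_add, Prod.snd_add, inner_add_right]; ring

lemma eq_zero_of_forall_mink_eq_zero (h : ∀ w, mink x w = 0) : x = 0 := by
  have hx := h (-x.1, x.2)
  simp only [mink] at hx
  have h₁ : x.1 = 0 := by nlinarith [real_inner_self_nonneg (x := x.2)]
  have h₂ : x.2 = 0 :=
    (inner_self_eq_zero (𝕜 := ℝ)).mp (by nlinarith [real_inner_self_nonneg (x := x.2)])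
  exact Prod.ext h₁ h₂

lemma fst_ne_zero_of_mink_self_eq_zero (hx : x ≠ 0) (hxx : mink x x = 0) : x.1 ≠ 0 := by
  intro h₁
  have h₂ : x.2 = 0 :=
    (inner_self_eq_zero (𝕜 := ℝ)).mp (by simp only [mink, h₁] at hxx; linarith)
  exact hx (Prod.ext h₁ h₂)

lemma eq_smul_of_mink_eq_zero (hx : x.1 ≠ 0) (hxx : mink x x = 0) (hyy : mink y y = 0)
    (hxy : mink x y = 0) : y = (y.1 / x.1) • x := by
  set c := y.1 / x.1
  have hyc : y.1 = c * x.1 := (div_mul_cancel₀ _ hx).symm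
  simp only [mink] at hxx hyy hxy
  have h₂ : (inner ℝ (y.2 - c • x.2) (y.2 - c • x.2) : ℝ) = 0 := by
    simp only [inner_sub_left, inner_sub_right, real_inner_smul_left, real_inner_smul_right,
      real_inner_comm x.2 y.2]
    rw [hyc] at hyy hxy
    linear_combination hyy - 2 * c * hxy + c ^ 2 * hxx
  exact Prod.ext hyc (sub_eq_zero.mp ((inner_self_eq_zero (𝕜 := ℝ)).mp h₂))

end Minkowski

theorem Submodule.sup_span_singleton_eq_top_of_finrank_add_one {K V : Type*} [DivisionRing K]
    [AddCommGroup V] [Module K V] [FiniteDimensional K V] {W : Submodule K V} {v : V}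
    (hW : Module.finrank K W + 1 = Module.finrank K V) (hv : v ∉ W) :
    W ⊔ Submodule.span K {v} = ⊤ :=
  Submodule.eq_top_of_finrank_eq (by rw [Submodule.finrank_sup_span_singleton hv, hW])

section DegenerateHyperplane

variable {k : ℕ} {H : Submodule ℝ (ℝ × EuclideanSpace ℝ (Fin k))}
  {ξ ζ y : ℝ × EuclideanSpace ℝ (Fin k)}

lemma mink_ne_zero_of_forall_mem_mink_eq_zero
    (hH : Module.finrank ℝ H + 1 = Module.finrank ℝ (ℝ × EuclideanSpace ℝ (Fin k)))
    (hζ : ζ ∉ H) (hξ : ξ ≠ 0) (hrad : ∀ w ∈ H, mink ξ w = 0) : mink ζ ξ ≠ 0 := by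
  intro hζξ
  refine hξ (eq_zero_of_forall_mink_eq_zero fun w => ?_)
  have hw : w ∈ H ⊔ Submodule.span ℝ {ζ} := by
    rw [Submodule.sup_span_singleton_eq_top_of_finrank_add_one hH hζ]; trivial
  obtain ⟨h, hh, _, hc, rfl⟩ := Submodule.mem_sup.mp hw
  obtain ⟨c, rfl⟩ := Submodule.mem_span_singleton.mp hc
  rw [mink_add_right, mink_smul_right, hrad h hh, mink_comm, hζξ, mul_zero, add_zero]

lemma eq_smul_of_mem_of_mink_self_eq_zero (hξH : ξ ∈ H) (hξ : ξ ≠ 0)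
    (hrad : ∀ w ∈ H, mink ξ w = 0) (hy : y ∈ H) (hyy : mink y y = 0) :
    y = (y.1 / ξ.1) • ξ :=
  have hξξ := hrad ξ hξH
  eq_smul_of_mink_eq_zero (fst_ne_zero_of_mink_self_eq_zero hξ hξξ) hξξ hyy (hrad y hy)

lemma mink_eq_zero_of_mem_of_mink_self_eq_zero (hξH : ξ ∈ H) (hξ : ξ ≠ 0)
    (hrad : ∀ w ∈ H, mink ξ w = 0) (hy : y ∈ H) (hyy : mink y y = 0) :
    ∀ w ∈ H, mink y w = 0 := by
  intro w hw
  rw [eq_smul_of_mem_of_mink_self_eq_zero hξH hξ hrad hy hyy, mink_smul_left, hrad w hw,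
    mul_zero]

end DegenerateHyperplane

theorem rigged_vector_exists_unique_general
    (n : ℕ)
    (H : Submodule ℝ (ℝ × EuclideanSpace ℝ (Fin (n - 1))))
    (hHrank : Module.finrank ℝ H = n - 1)
    (hHdeg : ∃ ξ ∈ H, ξ ≠ 0 ∧ ∀ w ∈ H, mink ξ w = 0)
    (ζ : ℝ × EuclideanSpace ℝ (Fin (n - 1))) (hζ : ζ ∉ H)
    (gt : (ℝ × EuclideanSpace ℝ (Fin (n - 1))) →
          (ℝ × EuclideanSpace ℝ (Fin (n - 1))) → ℝ)
    (hgt : ∀ v w, gt v w = mink v w + mink ζ v * mink ζ w) :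
    (∃! ξ, ξ ∈ H ∧ mink ξ ξ = 0 ∧ mink ζ ξ = 1) ∧
    (∀ ξ, ξ ∈ H → mink ξ ξ = 0 → mink ζ ξ = 1 →
      (∀ v ∈ H, gt ξ v = mink ζ v) ∧ gt ξ ξ = 1) := by
  obtain ⟨ξ₀, hξ₀H, hξ₀, hrad⟩ := hHdeg
  have hcodim :
      Module.finrank ℝ H + 1 = Module.finrank ℝ (ℝ × EuclideanSpace ℝ (Fin (n - 1))) := by
    rw [hHrank, Module.finrank_prod, Module.finrank_self, finrank_euclideanSpace_fin, add_comm]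
  have hs : mink ζ ξ₀ ≠ 0 := mink_ne_zero_of_forall_mem_mink_eq_zero hcodim hζ hξ₀ hrad
  have hξ₀ξ₀ : mink ξ₀ ξ₀ = 0 := hrad ξ₀ hξ₀H
  refine ⟨⟨(mink ζ ξ₀)⁻¹ • ξ₀, ⟨H.smul_mem _ hξ₀H, ?_, ?_⟩, ?_⟩, ?_⟩
  · rw [mink_smul_left, mink_smul_right, hξ₀ξ₀, mul_zero, mul_zero]
  · rw [mink_smul_right, inv_mul_cancel₀ hs]
  · rintro y ⟨hy, hyy, hζy⟩
    rw [eq_smul_of_mem_of_mink_self_eq_zero hξ₀H hξ₀ hrad hy hyy] at hζy ⊢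
    rw [mink_smul_right] at hζy
    rw [eq_inv_of_mul_eq_one_left hζy]
  · intro ξ hξ hξξ hζξ
    have hξrad := mink_eq_zero_of_mem_of_mink_self_eq_zero hξ₀H hξ₀ hrad hξ hξξ
    refine ⟨fun v hv => ?_, ?_⟩
    · rw [hgt, hξrad v hv, hζξ, zero_add, one_mul]
    · rw [hgt, hξξ, hζξ, zero_add, one_mul]

/-- Lemma `lemacaractproyeccion` of the paper (pointwise): given a degenerate
hyperplane `H` of Minkowski `n`-space and a rigging vector `ζ ∉ H`, there is a
unique lightlike vector `ξ ∈ H` with `m(ζ,ξ) = 1`; moreover this `ξ` is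
`g̃`-metrically equivalent to `m(ζ,·)|_H` and is `g̃`-unitary. -/
theorem rigged_vector_exists_unique
    (n : ℕ) (hn : 2 ≤ n)
    (H : Submodule ℝ (ℝ × EuclideanSpace ℝ (Fin (n - 1))))
    (hHrank : Module.finrank ℝ H = n - 1)
    (hHdeg : ∃ ξ ∈ H, ξ ≠ 0 ∧ ∀ w ∈ H, mink ξ w = 0)
    (ζ : ℝ × EuclideanSpace ℝ (Fin (n - 1))) (hζ : ζ ∉ H)
    (gt : (ℝ × EuclideanSpace ℝ (Fin (n - 1))) →
          (ℝ × EuclideanSpace ℝ (Fin (n - 1))) → ℝ)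
    (hgt : ∀ v w, gt v w = mink v w + mink ζ v * mink ζ w) :
    (∃! ξ, ξ ∈ H ∧ mink ξ ξ = 0 ∧ mink ζ ξ = 1) ∧
    (∀ ξ, ξ ∈ H → mink ξ ξ = 0 → mink ζ ξ = 1 →
      (∀ v ∈ H, gt ξ v = mink ζ v) ∧ gt ξ ξ = 1) :=
  rigged_vector_exists_unique_general n H hHrank hHdeg ζ hζ gt hgt
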